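/- Let r ≥ 1 and d ≥ 3 be integers, suppose G : [0,1] → [0,1] satisfies G(x) = ∫_x^1 (1 − G(t)^r)^{d−1} dt for all x ∈ [0,1], and define G̃(x) = ∫_x^1 (1 − G(t)^r)^d dt. Then G̃(x) = G(x) − G(x)^{r+1}/(r+1) for all x ∈ [0,1]. -/

import Mathlib

/-!
Differentiating the integral equation gives `G' = -(1 - G ^ r) ^ (d - 1)`, hence
`(G - G ^ (r + 1) / (r + 1))' = G' (1 - G ^ r) = -(1 - G ^ r) ^ d`, and both sides of the formula
vanish at `1`.

The integrand is not assumed integrable, and a non-integrable function has integral `0`. For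
`g x = ∫ t in x..b, φ (g t)` with `φ` continuous and `φ ∘ g` bounded, let `c` be the infimum of
the `x` for which `φ ∘ g` is integrable on `[x, b]`: on `(c, b]` the function `g` is Lipschitz,
so `φ ∘ g` is continuous and bounded there, while `g = 0` on `[a, c)`; hence `φ ∘ g` is
integrable on all of `[a, b]`.
-/

open MeasureTheory intervalIntegral Set Topology

section IntegralEquation

variable {f g φ : ℝ → ℝ} {a b : ℝ} {C : NNReal}

theorem lipschitzOnWith_of_eq_integral (hf : IntervalIntegrable f volume a b)
    (hC : ∀ t ∈ Icc a b, ‖f t‖ ≤ C) (hg : ∀ x ∈ Icc a b, g x = ∫ t in x..b, f t) :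
    LipschitzOnWith C g (Icc a b) := by
  refine LipschitzOnWith.of_dist_le_mul fun x hx y hy => ?_
  have hsub : uIcc x y ⊆ Icc a b := uIcc_subset_Icc hx hy
  have hint : ∀ {u}, u ∈ Icc a b → IntervalIntegrable f volume u b := fun hu =>
    hf.mono_set (uIcc_subset_uIcc (Icc_subset_uIcc hu) right_mem_uIcc)
  have hxy : g x - g y = ∫ t in x..y, f t := by
    rw [hg x hx, hg y hy, sub_eq_iff_eq_add,
      integral_add_adjacent_intervals (hf.mono_set (uIcc_subset_uIcc
        (Icc_subset_uIcc hx) (Icc_subset_uIcc hy))) (hint hy)]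
  rw [Real.dist_eq, Real.dist_eq, hxy, ← Real.norm_eq_abs, abs_sub_comm]
  exact norm_integral_le_of_norm_le_const fun t ht => hC t (hsub (uIoc_subset_uIcc ht))

theorem intervalIntegrable_comp_of_eq_integral (hφ : Continuous φ) (hab : a ≤ b)
    (hC : ∀ t ∈ Icc a b, ‖φ (g t)‖ ≤ C) (hg : ∀ x ∈ Icc a b, g x = ∫ t in x..b, φ (g t)) :
    IntervalIntegrable (fun t => φ (g t)) volume a b := by
  set S := {x ∈ Icc a b | IntervalIntegrable (fun t => φ (g t)) volume x b}
  have hbS : b ∈ S := ⟨right_mem_Icc.2 hab, IntervalIntegrable.refl⟩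
  have hS : BddBelow S := ⟨a, fun x hx => hx.1.1⟩
  set c := sInf S
  have hac : a ≤ c := le_csInf ⟨b, hbS⟩ fun x hx => hx.1.1
  have hcb : c ≤ b := csInf_le hS hbS
  have above : Ioc c b ⊆ S := by
    intro y hy
    obtain ⟨x, hxS, hxy⟩ := exists_lt_of_csInf_lt ⟨b, hbS⟩ hy.1
    refine ⟨⟨hac.trans hy.1.le, hy.2⟩, hxS.2.mono_set ?_⟩
    exact uIcc_subset_uIcc (Icc_subset_uIcc ⟨hxy.le, hy.2⟩) right_mem_uIcc
  have below : ∀ x ∈ Ico a c, g x = 0 := by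
    intro x hx
    have hxS : x ∉ S := notMem_of_lt_csInf hx.2 hS
    rw [hg x ⟨hx.1, hx.2.le.trans hcb⟩, integral_undef fun h => hxS ⟨⟨hx.1, hx.2.le.trans hcb⟩, h⟩]
  have hlip : LipschitzOnWith C g (Ioc c b) := by
    refine LipschitzOnWith.of_dist_le_mul fun x hx y hy => ?_
    have hm : min x y ∈ S := above ⟨lt_min hx.1 hy.1, (min_le_left _ _).trans hx.2⟩
    refine (lipschitzOnWith_of_eq_integral hm.2 (fun t ht => hC t ⟨hm.1.1.trans ht.1, ht.2⟩)
      (fun t ht => hg t ⟨hm.1.1.trans ht.1, ht.2⟩)).dist_le_mul x ⟨min_le_left _ _, hx.2⟩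
      y ⟨min_le_right _ _, hy.2⟩
  have h_cb : IntervalIntegrable (fun t => φ (g t)) volume c b := by
    rw [intervalIntegrable_iff_integrableOn_Ioc_of_le hcb]
    refine IntegrableOn.of_bound measure_Ioc_lt_top
      ((hφ.comp_continuousOn hlip.continuousOn).aestronglyMeasurable measurableSet_Ioc) C ?_
    exact (ae_restrict_iff' measurableSet_Ioc).2 (.of_forall fun t ht =>
      hC t ⟨hac.trans ht.1.le, ht.2⟩)
  have h_ac : IntervalIntegrable (fun t => φ (g t)) volume a c := by
    refine (intervalIntegrable_const (c := φ 0)).congr_uIoo fun t ht => ?_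
    rw [uIoo_of_le hac] at ht
    simp only [below t ⟨ht.1.le, ht.2⟩]
  exact h_ac.trans h_cb

theorem hasDerivAt_of_eq_integral (hφ : Continuous φ)
    (hf : IntervalIntegrable (fun t => φ (g t)) volume a b)
    (hC : ∀ t ∈ Icc a b, ‖φ (g t)‖ ≤ C) (hg : ∀ x ∈ Icc a b, g x = ∫ t in x..b, φ (g t))
    {t : ℝ} (ht : t ∈ Ioo a b) :
    HasDerivAt g (-φ (g t)) t := by
  have hcont : ContinuousOn (fun t => φ (g t)) (Icc a b) :=
    hφ.comp_continuousOn (lipschitzOnWith_of_eq_integral hf hC hg).continuousOn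
  have hIcc : Icc a b ∈ 𝓝 t := Icc_mem_nhds ht.1 ht.2
  have hderiv := integral_hasDerivAt_left
    (hf.mono_set (uIcc_subset_uIcc (Icc_subset_uIcc (Ioo_subset_Icc_self ht)) right_mem_uIcc))
    ((hcont.mono Ioo_subset_Icc_self).stronglyMeasurableAtFilter isOpen_Ioo t ht)
    (hcont.continuousAt hIcc)
  exact hderiv.congr_of_eventuallyEq (Filter.eventually_of_mem hIcc hg)

end IntegralEquation

theorem HasDerivAt.sub_pow_succ_div {G : ℝ → ℝ} {G' t : ℝ} (h : HasDerivAt G G' t) (r : ℕ) :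
    HasDerivAt (fun s => G s - G s ^ (r + 1) / (r + 1)) (G' * (1 - G t ^ r)) t := by
  refine (h.fun_sub ((h.fun_pow (r + 1)).div_const ((r : ℝ) + 1))).congr_deriv ?_
  push_cast
  field_simp

theorem Gtilde_formula_general (r d : ℕ) (hd : 3 ≤ d)
    (G : ℝ → ℝ)
    (hrange : ∀ x ∈ Set.Icc (0 : ℝ) 1, G x ∈ Set.Icc (0 : ℝ) 1)
    (hG : ∀ x ∈ Set.Icc (0 : ℝ) 1, G x = ∫ t in x..(1 : ℝ), (1 - G t ^ r) ^ (d - 1)) :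
    ∀ x ∈ Set.Icc (0 : ℝ) 1,
      (∫ t in x..(1 : ℝ), (1 - G t ^ r) ^ d) = G x - G x ^ (r + 1) / (r + 1) := by
  intro x hx
  set φ : ℝ → ℝ := fun u => (1 - u ^ r) ^ (d - 1)
  have hφ : Continuous φ := by fun_prop
  have hbound : ∀ t ∈ Icc (0 : ℝ) 1, ‖φ (G t)‖ ≤ (1 : NNReal) := fun t ht => by
    obtain ⟨h0, h1⟩ := hrange t ht
    have hpow : G t ^ r ≤ 1 := pow_le_one₀ h0 h1
    rw [Real.norm_of_nonneg (by positivity), NNReal.coe_one]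
    exact pow_le_one₀ (by linarith) (by linarith [pow_nonneg h0 r])
  have hint := intervalIntegrable_comp_of_eq_integral hφ zero_le_one hbound hG
  have hcont : ContinuousOn G (Icc x 1) :=
    (lipschitzOnWith_of_eq_integral hint hbound hG).continuousOn.mono (Icc_subset_Icc_left hx.1)
  have hderiv : ∀ t ∈ Ioo x 1,
      HasDerivAt (fun s => G s - G s ^ (r + 1) / (r + 1)) (-(1 - G t ^ r) ^ d) t := by
    intro t ht
    have := (hasDerivAt_of_eq_integral hφ hint hbound hG
      ⟨hx.1.trans_lt ht.1, ht.2⟩).sub_pow_succ_div r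
    rwa [neg_mul, ← pow_succ, Nat.sub_add_cancel (by omega)] at this
  have hFTC := integral_eq_sub_of_hasDerivAt_of_le hx.2 (by fun_prop) hderiv
    (ContinuousOn.intervalIntegrable_of_Icc hx.2 (by fun_prop)).neg
  have hG1 : G 1 = 0 := by simpa using hG 1 ⟨zero_le_one, le_rfl⟩
  rw [intervalIntegral.integral_neg, hG1, zero_pow (Nat.succ_ne_zero r), zero_div] at hFTC
  linarith

theorem Gtilde_formula (r d : ℕ) (hr : 1 ≤ r) (hd : 3 ≤ d)
    (G : ℝ → ℝ)
    (hrange : ∀ x ∈ Set.Icc (0 : ℝ) 1, G x ∈ Set.Icc (0 : ℝ) 1)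
    (hG : ∀ x ∈ Set.Icc (0 : ℝ) 1, G x = ∫ t in x..(1 : ℝ), (1 - G t ^ r) ^ (d - 1)) :
    ∀ x ∈ Set.Icc (0 : ℝ) 1,
      (∫ t in x..(1 : ℝ), (1 - G t ^ r) ^ d) = G x - G x ^ (r + 1) / (r + 1) :=
  Gtilde_formula_general r d hd G hrange hG
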